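/- arXiv:2410.23380 — 2 statements merged into one kernel-verified Lean document; each statement's English description precedes it below -/
import Mathlib

section
/- Let W := ∏_{k=1}^{6} exp(−(iπ/24)·(3·Z₀Z_kZ_{k+1} − Z₀ − Z_k − Z_{k+1})) (the six factors pairwise commute, being functions of the commuting operators Z₀,…,Z₆). Then W · X₀ · W* = B, i.e. conjugating the Pauli X on the central qubit by the inverse Levin–Gu entangling circuit on the hexagon produces the Levin–Gu plaquette operator B = −X₀·∏_{k=1}^{6} i^{(1 − Z_kZ_{k+1})/2}. -/
/-!
All the `Z`'s are diagonal in the computational basis, so `W = diag (exp (φ f))` and, since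
`X₀` flips the central bit, `W X₀ W* = X₀ · diag (exp (φ (flip₀ f) + conj (φ f)))`.
Flipping the central spin `s₀` contributes the phase `(iπ/4) s₀ (C - 2)`, where
`C = ∑ₖ sₖ sₖ₊₁` is the bond sum around the hexagon, whereas
`B = -X₀ · diag (exp (iπ (6 - C)/4))`. The two agree because domain walls on a closed ring
come in pairs, i.e. `C ≡ 2 [ZMOD 4]`.
-/

open Complex Matrix

noncomputable section

/-- The operator acting as the 2×2 matrix `M` on the qubit at site `j` of a finite qubit
system and as the identity on all other sites. -/
def localOp {S : Type*} [Fintype S] [DecidableEq S] (j : S)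
    (M : Matrix (Fin 2) (Fin 2) ℂ) :
    Matrix (S → Fin 2) (S → Fin 2) ℂ :=
  Matrix.of fun f g => if ∀ k, k ≠ j → f k = g k then M (f j) (g j) else 0

/-- The Pauli `X` matrix. -/
def PX : Matrix (Fin 2) (Fin 2) ℂ := !![0, 1; 1, 0]

/-- The Pauli `Z` matrix. -/
def PZ : Matrix (Fin 2) (Fin 2) ℂ := !![1, 0; 0, -1]

/-- Operators on the seven qubits of a hexagon of the triangular lattice:
qubit `0` is the center and qubits `1,…,6` are its neighbors in cyclic order. -/
abbrev HexOp := Matrix (Fin 7 → Fin 2) (Fin 7 → Fin 2) ℂ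

/-- Pauli `X` on qubit `j`. -/
def Xh (j : Fin 7) : HexOp := localOp j PX

/-- Pauli `Z` on qubit `j`. -/
def Zh (j : Fin 7) : HexOp := localOp j PZ

/-- The `k`-th neighboring qubit, `k = 1,…,6`. -/
def nb (k : Fin 6) : Fin 7 := ⟨k.val + 1, by omega⟩

/-- The cyclic successor of the `k`-th neighboring qubit (indices mod 6, `7 ↦ 1`). -/
def nb' (k : Fin 6) : Fin 7 := ⟨(k.val + 1) % 6 + 1, by omega⟩

/-- `i^M := exp (I π M / 2)` for a (self-adjoint) operator `M`. -/
def iPow (M : HexOp) : HexOp :=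
  NormedSpace.exp (((Real.pi : ℂ) * Complex.I / 2) • M)

/-- The Levin–Gu plaquette operator
`B := −X₀·∏_{k=1}^{6} i^{(1 − Z_k Z_{k+1})/2}`. -/
def LGB : HexOp :=
  -(Xh 0 * ((List.finRange 6).map fun k =>
      iPow (((2 : ℂ)⁻¹) • ((1 : HexOp) - Zh (nb k) * Zh (nb' k)))).prod)

/-- The inverse Levin–Gu entangling circuit on the hexagon
`W := ∏_{k=1}^{6} exp(−(iπ/24)·(3·Z₀Z_kZ_{k+1} − Z₀ − Z_k − Z_{k+1}))`. -/
def LGW : HexOp :=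
  ((List.finRange 6).map fun k =>
    NormedSpace.exp ((-((Real.pi : ℂ) * Complex.I / 24)) •
      ((3 : ℂ) • (Zh 0 * Zh (nb k) * Zh (nb' k)) - Zh 0 - Zh (nb k) - Zh (nb' k)))).prod

open ComplexConjugate

lemma Matrix.diagonal_list_prod {ι n α : Type*} [Fintype n] [DecidableEq n] [Semiring α]
    (l : List ι) (g : ι → n → α) :
    (l.map fun i => diagonal (g i)).prod = diagonal fun x => (l.map fun i => g i x).prod := by
  induction l with
  | nil => simp
  | cons a l ih => simp [ih, diagonal_mul_diagonal]

section LocalOp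

variable {S : Type*} [Fintype S] [DecidableEq S]

lemma localOp_diagonal (j : S) (v : Fin 2 → ℂ) :
    localOp j (diagonal v) = diagonal fun f => v (f j) := by
  ext f g
  by_cases hfg : f = g
  · subst hfg
    simp [localOp]
  · have : ¬ ((∀ k, k ≠ j → f k = g k) ∧ f j = g j) := fun ⟨h, hj⟩ =>
      hfg (funext fun k => if hk : k = j then hk ▸ hj else h k hk)
    simp only [localOp, of_apply, diagonal_apply, hfg, if_false]
    split_ifs <;> simp_all

def flipAt (j : S) (f : S → Fin 2) : S → Fin 2 := Function.update f j (f j + 1)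

lemma fin_two_eq_add_one_iff_ne (a b : Fin 2) : a = b + 1 ↔ a ≠ b := by
  fin_cases a <;> fin_cases b <;> decide

lemma localOp_PX_apply (j : S) (f g : S → Fin 2) :
    localOp j PX f g = if f = flipAt j g then 1 else 0 := by
  have hflip : f = flipAt j g ↔ (∀ k, k ≠ j → f k = g k) ∧ f j ≠ g j := by
    rw [← fin_two_eq_add_one_iff_ne, flipAt, funext_iff]
    refine ⟨fun h => ⟨fun k hk => by simpa [hk] using h k, by simpa using h j⟩,
      fun ⟨h, hj⟩ k => ?_⟩
    by_cases hk : k = j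
    · subst hk; simpa using hj
    · simpa [hk] using h k hk
  have hPX : ∀ a b : Fin 2, PX a b = if a ≠ b then 1 else 0 := by
    intro a b; fin_cases a <;> fin_cases b <;> simp [PX]
  simp only [localOp, of_apply, hPX, ← ite_and, ← hflip]

lemma diagonal_mul_localOp_PX (j : S) (d : (S → Fin 2) → ℂ) :
    diagonal d * localOp j PX = localOp j PX * diagonal fun f => d (flipAt j f) := by
  ext f g
  simp only [diagonal_mul, mul_diagonal, localOp_PX_apply]
  split_ifs with h
  · rw [h, mul_comm]
  · simp

end LocalOp

lemma Int.sum_units_modEq_card_add_one_sub_prod {ι : Type*} (s : Finset ι) (u : ι → ℤˣ) :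
    ∑ i ∈ s, (u i : ℤ) ≡ s.card + 1 - ((∏ i ∈ s, u i : ℤˣ) : ℤ) [ZMOD 4] := by
  classical
  induction s using Finset.induction_on with
  | empty => simp
  | insert a s ha ih =>
    rw [Finset.sum_insert ha, Finset.prod_insert ha, Finset.card_insert_of_notMem ha]
    unfold Int.ModEq at *
    rcases Int.units_eq_one_or (u a) with h | h <;>
      rcases Int.units_eq_one_or (∏ i ∈ s, u i) with hp | hp <;>
      simp only [h, hp, Units.val_one, Units.val_neg, mul_one, mul_neg, neg_neg] at ih ⊢ <;>
      push_cast <;> omega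

lemma Fin.sum_units_mul_add_one_modEq {n : ℕ} [NeZero n] (s : Fin n → ℤˣ) :
    ∑ k, ((s k * s (k + 1) : ℤˣ) : ℤ) ≡ n [ZMOD 4] := by
  have hprod : ∏ k, (s k * s (k + 1)) = 1 := by
    rw [Finset.prod_mul_distrib,
      Fintype.prod_equiv (Equiv.addRight 1) (fun k => s (k + 1)) s fun _ => rfl, ← sq,
      Int.units_sq]
  simpa [hprod] using
    Int.sum_units_modEq_card_add_one_sub_prod Finset.univ fun k => s k * s (k + 1)

def spin : Fin 2 → ℤˣ := ![1, -1]

lemma PZ_eq_diagonal : PZ = diagonal fun b => (spin b : ℂ) := by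
  ext a b
  fin_cases a <;> fin_cases b <;> simp [PZ, spin]

lemma Zh_eq_diagonal (j : Fin 7) : Zh j = diagonal fun f => (spin (f j) : ℂ) := by
  rw [Zh, PZ_eq_diagonal, localOp_diagonal]

lemma nb'_eq_nb_add_one (k : Fin 6) : nb' k = nb (k + 1) := by
  fin_cases k <;> rfl

lemma nb_ne_zero (k : Fin 6) : nb k ≠ 0 := Fin.ne_of_val_ne (by simp [nb])

lemma nb'_ne_zero (k : Fin 6) : nb' k ≠ 0 := Fin.ne_of_val_ne (by simp [nb'])

lemma spin_add_one (b : Fin 2) : spin (b + 1) = -spin b := by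
  fin_cases b <;> simp [spin]

def bondSum (f : Fin 7 → Fin 2) : ℤ :=
  ∑ k : Fin 6, ((spin (f (nb k)) * spin (f (nb' k)) : ℤˣ) : ℤ)

lemma bondSum_modEq (f : Fin 7 → Fin 2) : bondSum f ≡ 2 [ZMOD 4] := by
  have h := Fin.sum_units_mul_add_one_modEq fun k => spin (f (nb k))
  simp only [← nb'_eq_nb_add_one] at h
  exact h.trans (by decide)

lemma exp_pi_I_div_four_mul_eq_neg (t : ℤˣ) {C : ℤ} (hC : C ≡ 2 [ZMOD 4]) :
    Complex.exp (Real.pi * I / 4 * t * (C - 2)) = -Complex.exp (Real.pi * I / 4 * (6 - C)) := by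
  obtain ⟨m, rfl⟩ : ∃ m, C = 4 * m + 2 := ⟨C / 4, by unfold Int.ModEq at hC; omega⟩
  rw [← neg_one_mul, ← Complex.exp_pi_mul_I, ← Complex.exp_add,
    Complex.exp_eq_exp_iff_exists_int]
  rcases Int.units_eq_one_or t with rfl | rfl
  · exact ⟨m - 1, by push_cast; ring⟩
  · exact ⟨-1, by push_cast; ring⟩

def lgwPhase (f : Fin 7 → Fin 2) : ℂ :=
  ∑ k : Fin 6, -(Real.pi * I / 24 * (3 * ((spin (f 0) : ℂ) * spin (f (nb k)) * spin (f (nb' k)))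
    - spin (f 0) - spin (f (nb k)) - spin (f (nb' k))))

lemma LGW_eq_diagonal : LGW = diagonal fun f => Complex.exp (lgwPhase f) := by
  simp only [LGW, Zh_eq_diagonal, diagonal_mul_diagonal, ← diagonal_smul, diagonal_sub,
    exp_diagonal, Pi.exp_def, diagonal_list_prod, ← Fin.prod_univ_def, lgwPhase, Complex.exp_sum,
    ← Complex.exp_eq_exp_ℂ]
  simp

lemma LGB_eq :
    LGB = -(Xh 0 * diagonal fun f => Complex.exp (Real.pi * I / 4 * (6 - bondSum f))) := by
  simp only [LGB, iPow, Zh_eq_diagonal, diagonal_mul_diagonal, ← diagonal_one, ← diagonal_smul,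
    diagonal_sub, exp_diagonal, Pi.exp_def, diagonal_list_prod, ← Fin.prod_univ_def,
    ← Complex.exp_eq_exp_ℂ, ← Complex.exp_sum, Pi.smul_apply, smul_eq_mul, bondSum]
  congr 4 with f
  congr 1
  push_cast
  simp only [mul_sub, mul_one, Finset.sum_sub_distrib, ← Finset.mul_sum, Finset.sum_const,
    Finset.card_univ, Fintype.card_fin, nsmul_eq_mul, Nat.cast_ofNat]
  ring

lemma lgwPhase_flipAt_add_conj (f : Fin 7 → Fin 2) :
    lgwPhase (flipAt 0 f) + conj (lgwPhase f) =
      Real.pi * I / 4 * spin (f 0) * (bondSum f - 2) := by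
  have h0 : spin (flipAt 0 f 0) = -spin (f 0) := by simp [flipAt, spin_add_one]
  have hnb (k : Fin 6) : flipAt 0 f (nb k) = f (nb k) := Function.update_of_ne (nb_ne_zero k) _ _
  have hnb' (k : Fin 6) : flipAt 0 f (nb' k) = f (nb' k) :=
    Function.update_of_ne (nb'_ne_zero k) _ _
  calc lgwPhase (flipAt 0 f) + conj (lgwPhase f)
      = ∑ k : Fin 6, Real.pi * I / 12 * spin (f 0) *
          (3 * ((spin (f (nb k)) * spin (f (nb' k)) : ℤˣ) : ℤ) - 1) := by
        simp only [lgwPhase, map_sum, ← Finset.sum_add_distrib, h0, hnb, hnb']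
        refine Finset.sum_congr rfl fun k _ => ?_
        simp only [map_neg, map_mul, map_sub, map_div₀, Complex.conj_ofReal, Complex.conj_I,
          map_intCast, map_ofNat]
        push_cast
        ring
    _ = Real.pi * I / 4 * spin (f 0) * (bondSum f - 2) := by
        rw [← Finset.mul_sum, Finset.sum_sub_distrib, ← Finset.mul_sum, Finset.sum_const,
          Finset.card_univ, Fintype.card_fin, bondSum]
        push_cast
        ring

/-- Conjugating the Pauli `X` on the central qubit by the inverse Levin–Gu
entangling circuit on the hexagon produces the Levin–Gu plaquette operator:
`W · X₀ · W* = B`. -/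
theorem levin_gu_entangler_conjugates_X_to_B : LGW * Xh 0 * LGWᴴ = LGB := by
  rw [LGW_eq_diagonal, LGB_eq, diagonal_conjTranspose, Xh, diagonal_mul_localOp_PX, mul_assoc,
    diagonal_mul_diagonal, ← mul_neg, diagonal_neg]
  congr 2 with f
  rw [Pi.star_apply, Complex.star_def, ← Complex.exp_conj, ← Complex.exp_add,
    lgwPhase_flipAt_add_conj, exp_pi_I_div_four_mul_eq_neg _ (bondSum_modEq f)]

end
end

section
/- Symmetry action on the entangled string operator: let v₀, v₁, …, v_n be the vertices of a finite self-avoiding path γ with edges e₁, …, e_n (edge e_k joining v_{k−1} and v_k, with arbitrary orientations ∂₀e_k, ∂₁e_k ∈ {v_{k−1}, v_k}), and define the entangled string operator F̃_γ := (∏_{k=1}^{n} σ^z_{e_k}) · ∏_{k=1}^{n} i^{σ^x_{e_k}(τ^z_{∂₁e_k} − τ^z_{∂₀e_k})/2}. Then conjugation by the spin-flip on all vertices of the path gives (∏_{j=0}^{n} τ^x_{v_j}) · F̃_γ · (∏_{j=0}^{n} τ^x_{v_j}) = τ^z_{v_n} · τ^z_{v_0} · F̃_γ. Moreover, the dual string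 operator F_{γ̄} := ∏_{e∈γ̄} σ^x_e is invariant under this conjugation. -/
/-!
The spin flip `G = ∏ⱼ τ^x_{v_j}` is an involution that commutes with every edge operator and
anticommutes with every `τ^z_{v_j}`, so conjugation by `G` flips the sign of each exponent
`A_k = σ^x_{e_k} (τ^z_{∂₁e_k} - τ^z_{∂₀e_k})`. Writing `A_k = B₁ - B₀` with the commuting
involutions `B₁ = σ^x τ^z_{∂₁}`, `B₀ = σ^x τ^z_{∂₀}` and using `exp (iπ/2 · B) = i B` for an
involution `B`, one gets `exp (-iπ/4 · A_k) = τ^z_{∂₁e_k} τ^z_{∂₀e_k} · exp (iπ/4 · A_k)`.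
The vertex factors commute with all the exponentials and with the `σ^z`, and their product
telescopes along the path to `τ^z_{v_n} τ^z_{v_0}`. The dual string consists of edge
operators only, so it commutes with `G`.
-/

open Complex Matrix

noncomputable section

/-- Operators on a system consisting of the vertex qubits `v₀, …, v_n` of a finite
self-avoiding path (indexed by `Fin (n+1)`, on the left) together with the edge qubits of
the ambient lattice patch (a finite type `EE`, on the right). -/
abbrev PathOp (n : ℕ) (EE : Type*) [Fintype EE] [DecidableEq EE] :=
  Matrix ((Fin (n + 1) ⊕ EE) → Fin 2) ((Fin (n + 1) ⊕ EE) → Fin 2) ℂ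

variable {EE : Type*} [Fintype EE] [DecidableEq EE]

/-- `τ^x_{v_j}`. -/
def txv (n : ℕ) (EE : Type*) [Fintype EE] [DecidableEq EE] (j : Fin (n + 1)) :
    PathOp n EE := localOp (Sum.inl j) PX

/-- `τ^z_{v_j}`. -/
def tzv (n : ℕ) (EE : Type*) [Fintype EE] [DecidableEq EE] (j : Fin (n + 1)) :
    PathOp n EE := localOp (Sum.inl j) PZ

/-- `σ^x_e` for an edge qubit `e`. -/
def sxe (n : ℕ) {EE : Type*} [Fintype EE] [DecidableEq EE] (e : EE) :
    PathOp n EE := localOp (Sum.inr e) PX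

/-- `σ^z_e` for an edge qubit `e`. -/
def sze (n : ℕ) {EE : Type*} [Fintype EE] [DecidableEq EE] (e : EE) :
    PathOp n EE := localOp (Sum.inr e) PZ

/-- The entangled string operator
`F̃_γ := (∏_{k=1}^{n} σ^z_{e_k}) · ∏_{k=1}^{n} i^{σ^x_{e_k}(τ^z_{∂₁e_k} − τ^z_{∂₀e_k})/2}`
along the path with edges `e_k = pe k` and orientations `∂₀ = d0`, `∂₁ = d1`. -/
def Ftil (n : ℕ) {EE : Type*} [Fintype EE] [DecidableEq EE]
    (pe : Fin n → EE) (d0 d1 : Fin n → Fin (n + 1)) : PathOp n EE :=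
  ((List.finRange n).map fun k => sze n (pe k)).prod *
    ((List.finRange n).map fun k =>
      NormedSpace.exp (((Real.pi : ℂ) * Complex.I / 4) •
        (sxe n (pe k) * (tzv n EE (d1 k) - tzv n EE (d0 k))))).prod

/-- The spin flip `∏_{j=0}^{n} τ^x_{v_j}` on all vertices of the path. -/
def Gflip (n : ℕ) (EE : Type*) [Fintype EE] [DecidableEq EE] : PathOp n EE :=
  ((List.finRange (n + 1)).map fun j => txv n EE j).prod

section LocalOp

variable {S : Type*} [Fintype S] [DecidableEq S]

theorem localOp_update_apply (j : S) (M : Matrix (Fin 2) (Fin 2) ℂ) (f g : S → Fin 2)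
    (x : Fin 2) :
    localOp j M (Function.update f j x) g =
      if ∀ k, k ≠ j → f k = g k then M x (g j) else 0 := by
  simp +contextual only [localOp, of_apply, Function.update_self, ne_eq,
    not_false_eq_true, Function.update_of_ne]

theorem localOp_apply_update (j : S) (M : Matrix (Fin 2) (Fin 2) ℂ) (f g : S → Fin 2)
    (x : Fin 2) :
    localOp j M f (Function.update g j x) =
      if ∀ k, k ≠ j → f k = g k then M (f j) x else 0 := by
  simp +contextual only [localOp, of_apply, Function.update_self, ne_eq,
    not_false_eq_true, Function.update_of_ne]

theorem sum_localOp_apply_mul (j : S) (M : Matrix (Fin 2) (Fin 2) ℂ) (f : S → Fin 2)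
    (F : (S → Fin 2) → ℂ) :
    ∑ h, localOp j M f h * F h = ∑ x, M (f j) x * F (Function.update f j x) := by
  have hvanish : ∀ h ∉ Finset.univ.image (Function.update f j), localOp j M f h * F h = 0 := by
    intro h hh
    rw [localOp, of_apply, if_neg, zero_mul]
    refine fun hfh => hh (Finset.mem_image.2 ⟨h j, Finset.mem_univ _, funext fun k => ?_⟩)
    by_cases hk : k = j
    · subst hk; simp
    · simp [hk, hfh k hk]
  rw [← Finset.sum_subset (Finset.subset_univ _) fun h _ => hvanish h,
    Finset.sum_image fun x _ y _ hxy => Function.update_injective f j hxy]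
  simp [localOp_apply_update]

theorem localOp_mul (j : S) (M N : Matrix (Fin 2) (Fin 2) ℂ) :
    localOp j M * localOp j N = localOp j (M * N) := by
  ext f g
  simp only [mul_apply, sum_localOp_apply_mul, localOp_update_apply, mul_ite, mul_zero]
  rw [localOp, of_apply, mul_apply]
  split_ifs <;> simp

theorem localOp_one (j : S) : localOp j (1 : Matrix (Fin 2) (Fin 2) ℂ) = 1 := by
  ext f g
  by_cases hfg : f = g
  · subst hfg
    simp [localOp, one_apply_eq]
  · have hj : (∀ k, k ≠ j → f k = g k) → f j ≠ g j := fun h hj =>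
      hfg (funext fun k => if hk : k = j then hk ▸ hj else h k hk)
    simp only [localOp, of_apply, one_apply, hfg, if_false]
    split_ifs with h <;> simp_all

theorem localOp_neg (j : S) (M : Matrix (Fin 2) (Fin 2) ℂ) :
    localOp j (-M) = -localOp j M := by
  ext f g
  rw [neg_apply, localOp, localOp, of_apply, of_apply]
  split_ifs <;> simp

theorem localOp_mul_localOp_apply_of_ne {i j : S} (hij : i ≠ j)
    (M N : Matrix (Fin 2) (Fin 2) ℂ) (f g : S → Fin 2) :
    (localOp i M * localOp j N) f g =
      if ∀ k, k ≠ i → k ≠ j → f k = g k then M (f i) (g i) * N (f j) (g j) else 0 := by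
  have hrow : ∀ x, localOp j N (Function.update f i x) g =
      if x = g i then
        if ∀ k, k ≠ i → k ≠ j → f k = g k then N (f j) (g j) else 0
      else 0 := by
    intro x
    rw [localOp, of_apply, Function.update_of_ne hij.symm]
    by_cases hx : x = g i
    · subst hx
      refine (if_congr ⟨fun h k hki hkj => ?_, fun h k hkj => ?_⟩ rfl rfl).trans (if_pos rfl).symm
      · simpa [Function.update_of_ne hki] using h k hkj
      · by_cases hki : k = i
        · simp [hki]
        · simp [Function.update_of_ne hki, h k hki hkj]
    · rw [if_neg hx, if_neg]
      exact fun h => hx (by simpa using h i hij)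
  simp only [mul_apply, sum_localOp_apply_mul, hrow, mul_ite, mul_zero, Finset.sum_ite_eq',
    Finset.mem_univ, if_true]

theorem commute_localOp_of_ne {i j : S} (hij : i ≠ j) (M N : Matrix (Fin 2) (Fin 2) ℂ) :
    Commute (localOp i M) (localOp j N) := by
  ext f g
  rw [localOp_mul_localOp_apply_of_ne hij, localOp_mul_localOp_apply_of_ne hij.symm,
    mul_comm (M _ _)]
  simp only [Imp.swap (a := _ ≠ i)]

end LocalOp

section ListProd

variable {M : Type*} [Monoid M]

theorem List.prod_mul_prod_eq_one_of_pairwise_commute {l : List M} (hl : l.Pairwise Commute)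
    (hsq : ∀ x ∈ l, x * x = 1) : l.prod * l.prod = 1 := by
  induction l with
  | nil => simp
  | cons a t ih =>
    rw [List.pairwise_cons] at hl
    have hcomm : Commute a t.prod := Commute.list_prod_right _ _ hl.1
    rw [List.prod_cons, ← hcomm.mul_mul_mul_comm, hsq a List.mem_cons_self, one_mul,
      ih hl.2 fun x hx => hsq x (List.mem_cons_of_mem _ hx)]

theorem List.mul_prod_mul_eq_prod_map_of_mul_self_eq_one {G : M} (hG : G * G = 1)
    (l : List M) : G * l.prod * G = (l.map fun x => G * x * G).prod := by
  induction l with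
  | nil => simpa using hG
  | cons a t ih =>
    rw [List.prod_cons, List.map_cons, List.prod_cons, ← ih]
    simp only [mul_assoc, ← mul_assoc G G, hG, one_mul]

theorem List.prod_map_mul_of_commute {ι : Type*} (l : List ι) (a b : ι → M)
    (h : ∀ i ∈ l, ∀ j ∈ l, Commute (b i) (a j)) :
    (l.map fun i => a i * b i).prod = (l.map a).prod * (l.map b).prod := by
  induction l with
  | nil => simp
  | cons p t ih =>
    have hp : Commute (b p) (t.map a).prod := Commute.list_prod_right _ _ fun x hx => by
      obtain ⟨j, hj, rfl⟩ := List.mem_map.mp hx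
      exact h p List.mem_cons_self j (List.mem_cons_of_mem _ hj)
    simp only [List.map_cons, List.prod_cons,
      ih fun i hi j hj => h i (List.mem_cons_of_mem _ hi) j (List.mem_cons_of_mem _ hj),
      mul_assoc, ← mul_assoc (b p), hp.eq]

theorem List.prod_map_finRange_castSucc_mul_succ {n : ℕ} (z : Fin (n + 1) → M)
    (hz : ∀ i, z i * z i = 1) :
    ((List.finRange n).map fun k => z k.castSucc * z k.succ).prod = z 0 * z (Fin.last n) := by
  induction n with
  | zero => simpa using (hz 0).symm
  | succ m ih =>
    rw [List.finRange_succ, List.map_cons, List.prod_cons, List.map_map]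
    have := ih (z ∘ Fin.succ) fun i => hz _
    simp only [Function.comp_def, Fin.succ_last, Fin.castSucc_succ] at this ⊢
    rw [this, Fin.castSucc_zero, mul_assoc, ← mul_assoc (z (Fin.succ 0)), hz, one_mul]

end ListProd

theorem List.semiconjBy_prod_map_neg {R ι : Type*} [Ring R] (x : ι → R) {z : R} {j : ι}
    (hj : SemiconjBy (x j) z (-z)) (hx : ∀ i ≠ j, Commute (x i) z) {l : List ι}
    (hl : l.Nodup) (hjl : j ∈ l) : SemiconjBy (l.map x).prod z (-z) := by
  induction l with
  | nil => simp at hjl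
  | cons a t ih =>
    rw [List.nodup_cons] at hl
    rw [List.map_cons, List.prod_cons]
    rcases List.mem_cons.mp hjl with rfl | hjt
    · refine hj.mul_left (Commute.list_prod_left _ _ fun y hy => ?_)
      obtain ⟨i, hi, rfl⟩ := List.mem_map.mp hy
      exact hx i fun hij => hl.1 (hij ▸ hi)
    · exact SemiconjBy.mul_left (hx a fun haj => hl.1 (haj ▸ hjt)).neg_right (ih hl.2 hjt)

theorem NormedSpace.exp_smul_of_mul_self_eq_one {𝔸 : Type*} [Ring 𝔸] [Algebra ℂ 𝔸]
    [TopologicalSpace 𝔸] [IsTopologicalRing 𝔸] [ContinuousSMul ℂ 𝔸] [T2Space 𝔸] {B : 𝔸}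
    (hB : B * B = 1) (c : ℂ) :
    NormedSpace.exp (c • B) = Complex.cosh c • (1 : 𝔸) + Complex.sinh c • B := by
  set P : 𝔸 := (2⁻¹ : ℂ) • (1 + B)
  set Q : 𝔸 := (2⁻¹ : ℂ) • (1 - B)
  have hPB : P * B = P := by
    simp only [P, smul_mul_assoc, add_mul, one_mul, hB, add_comm]
  have hQB : Q * B = -Q := by
    simp only [Q, smul_mul_assoc, sub_mul, one_mul, hB, ← smul_neg, neg_sub]
  have hpow : ∀ k : ℕ, (c • B) ^ k = c ^ k • P + (-c) ^ k • Q := by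
    intro k
    induction k with
    | zero => simp only [pow_zero, one_smul, P, Q]; module
    | succ k ih =>
      rw [pow_succ, ih, add_mul, smul_mul_smul_comm, smul_mul_smul_comm, hPB, hQB, smul_neg,
        ← neg_smul, pow_succ, pow_succ, mul_neg]
  have hsum : HasSum (fun k : ℕ => ((k.factorial : ℂ)⁻¹) • (c • B) ^ k)
      (Complex.exp c • P + Complex.exp (-c) • Q) := by
    simp only [hpow, smul_add, smul_smul, Complex.exp_eq_exp_ℂ]
    have hser := fun w : ℂ => NormedSpace.exp_series_hasSum_exp' (𝕂 := ℂ) w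
    simp only [smul_eq_mul] at hser
    exact ((hser c).smul_const P).add ((hser (-c)).smul_const Q)
  rw [congrFun (NormedSpace.exp_eq_tsum ℂ) (c • B), hsum.tsum_eq, Complex.cosh, Complex.sinh]
  simp only [P, Q]
  module

theorem NormedSpace.exp_pi_div_two_mul_I_smul_of_mul_self_eq_one {𝔸 : Type*} [Ring 𝔸]
    [Algebra ℂ 𝔸] [TopologicalSpace 𝔸] [IsTopologicalRing 𝔸] [ContinuousSMul ℂ 𝔸] [T2Space 𝔸]
    {B : 𝔸} (hB : B * B = 1) :
    NormedSpace.exp ((((Real.pi / 2 : ℝ) : ℂ) * I) • B) = I • B := by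
  rw [NormedSpace.exp_smul_of_mul_self_eq_one hB, Complex.cosh_mul_I, Complex.sinh_mul_I,
    ← Complex.ofReal_cos, ← Complex.ofReal_sin, Real.cos_pi_div_two, Real.sin_pi_div_two]
  simp

theorem Matrix.exp_neg_pi_mul_I_div_four_smul_sub {m : Type*} [Fintype m] [DecidableEq m]
    {B₀ B₁ : Matrix m m ℂ} (h₀ : B₀ * B₀ = 1) (h₁ : B₁ * B₁ = 1) (h : Commute B₀ B₁) :
    NormedSpace.exp (-(((Real.pi : ℂ) * I / 4) • (B₁ - B₀))) =
      B₀ * B₁ * NormedSpace.exp (((Real.pi : ℂ) * I / 4) • (B₁ - B₀)) := by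
  set a : ℂ := ((Real.pi / 2 : ℝ) : ℂ) * I
  have hsplit : -(((Real.pi : ℂ) * I / 4) • (B₁ - B₀)) =
      a • B₀ + a • -B₁ + ((Real.pi : ℂ) * I / 4) • (B₁ - B₀) := by
    simp only [a]
    push_cast
    module
  have hc₀ : Commute B₀ (B₁ - B₀) := h.sub_right (Commute.refl _)
  have hc₁ : Commute B₁ (B₁ - B₀) := (Commute.refl _).sub_right h.symm
  rw [hsplit,
    Matrix.exp_add_of_commute _ _
      (((hc₀.smul_left a).add_left (hc₁.neg_left.smul_left a)).smul_right _),
    Matrix.exp_add_of_commute _ _ ((h.neg_right.smul_left a).smul_right a),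
    NormedSpace.exp_pi_div_two_mul_I_smul_of_mul_self_eq_one h₀,
    NormedSpace.exp_pi_div_two_mul_I_smul_of_mul_self_eq_one (by rwa [neg_mul_neg]),
    smul_mul_smul_comm, I_mul_I, mul_neg, neg_smul, one_smul, neg_neg]

theorem Matrix.mul_exp_mul_eq_exp_neg {m : Type*} [Fintype m] [DecidableEq m]
    {G A : Matrix m m ℂ} (hG : G * G = 1) (hA : SemiconjBy G A (-A)) :
    G * NormedSpace.exp A * G = NormedSpace.exp (-A) := by
  have hconj := Matrix.exp_conj G A ⟨⟨G, G, hG, hG⟩, rfl⟩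
  rw [Matrix.inv_eq_left_inv hG, hA.eq, mul_assoc, hG, mul_one] at hconj
  exact hconj.symm

theorem PX_mul_PX : PX * PX = 1 := by
  simp [PX, one_fin_two]

theorem PZ_mul_PZ : PZ * PZ = 1 := by
  simp [PZ, one_fin_two]

theorem PX_mul_PZ : PX * PZ = -(PZ * PX) := by
  simp [PX, PZ]

section PathOp

variable (n : ℕ)

theorem txv_mul_self (j : Fin (n + 1)) : txv n EE j * txv n EE j = 1 := by
  rw [txv, localOp_mul, PX_mul_PX, localOp_one]

theorem tzv_mul_self (j : Fin (n + 1)) : tzv n EE j * tzv n EE j = 1 := by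
  rw [tzv, localOp_mul, PZ_mul_PZ, localOp_one]

theorem sxe_mul_self (e : EE) : sxe n e * sxe n e = 1 := by
  rw [sxe, localOp_mul, PX_mul_PX, localOp_one]

theorem semiconjBy_txv_tzv_self (j : Fin (n + 1)) :
    SemiconjBy (txv n EE j) (tzv n EE j) (-tzv n EE j) := by
  rw [SemiconjBy, txv, tzv, localOp_mul, neg_mul, localOp_mul, PX_mul_PZ, localOp_neg]

theorem commute_tzv_tzv (i j : Fin (n + 1)) : Commute (tzv n EE i) (tzv n EE j) := by
  by_cases hij : i = j
  · rw [hij]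
  · exact commute_localOp_of_ne (Sum.inl_injective.ne hij) _ _

theorem commute_sxe_tzv (e : EE) (j : Fin (n + 1)) : Commute (sxe n e) (tzv n EE j) :=
  commute_localOp_of_ne Sum.inr_ne_inl _ _

theorem commute_tzv_sze (j : Fin (n + 1)) (e : EE) : Commute (tzv n EE j) (sze n e) :=
  commute_localOp_of_ne Sum.inl_ne_inr _ _

theorem commute_tzv_exp (j : Fin (n + 1)) (e : EE) (a b : Fin (n + 1)) :
    Commute (tzv n EE j) (NormedSpace.exp (((Real.pi : ℂ) * I / 4) •
      (sxe n e * (tzv n EE a - tzv n EE b)))) :=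
  (((commute_sxe_tzv n e j).symm.mul_right
    ((commute_tzv_tzv n j a).sub_right (commute_tzv_tzv n j b))).smul_right _).exp_right

theorem Gflip_mul_self : Gflip n EE * Gflip n EE = 1 := by
  refine List.prod_mul_prod_eq_one_of_pairwise_commute ?_ ?_
  · exact List.pairwise_map.2 ((List.nodup_finRange _).imp fun hij =>
      commute_localOp_of_ne (Sum.inl_injective.ne hij) _ _)
  · simp [txv_mul_self]

theorem semiconjBy_Gflip_tzv (j : Fin (n + 1)) :
    SemiconjBy (Gflip n EE) (tzv n EE j) (-tzv n EE j) :=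
  List.semiconjBy_prod_map_neg _ (semiconjBy_txv_tzv_self n j)
    (fun _ hij => commute_localOp_of_ne (Sum.inl_injective.ne hij) _ _)
    (List.nodup_finRange _) (List.mem_finRange j)

theorem commute_Gflip_localOp_inr (e : EE) (M : Matrix (Fin 2) (Fin 2) ℂ) :
    Commute (Gflip n EE) (localOp (Sum.inr e) M) :=
  Commute.list_prod_left _ _ fun x hx => by
    obtain ⟨j, -, rfl⟩ := List.mem_map.mp hx
    exact commute_localOp_of_ne Sum.inl_ne_inr _ _

theorem Gflip_mul_exp_mul_Gflip (e : EE) (a b : Fin (n + 1)) :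
    Gflip n EE * NormedSpace.exp (((Real.pi : ℂ) * I / 4) •
        (sxe n e * (tzv n EE a - tzv n EE b))) * Gflip n EE =
      tzv n EE a * tzv n EE b * NormedSpace.exp (((Real.pi : ℂ) * I / 4) •
        (sxe n e * (tzv n EE a - tzv n EE b))) := by
  have hG : Gflip n EE * Gflip n EE = 1 := Gflip_mul_self n
  have hGA : SemiconjBy (Gflip n EE) (sxe n e * (tzv n EE a - tzv n EE b))
      (-(sxe n e * (tzv n EE a - tzv n EE b))) := by
    rw [← mul_neg, neg_sub, ← neg_sub_neg (tzv n EE a)]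
    exact SemiconjBy.mul_right (commute_Gflip_localOp_inr n e PX : Commute _ (sxe n e))
      ((semiconjBy_Gflip_tzv n a).sub_right (semiconjBy_Gflip_tzv n b))
  have hconj : Gflip n EE * NormedSpace.exp (((Real.pi : ℂ) * I / 4) •
        (sxe n e * (tzv n EE a - tzv n EE b))) * Gflip n EE =
      NormedSpace.exp (-(((Real.pi : ℂ) * I / 4) • (sxe n e * (tzv n EE a - tzv n EE b)))) := by
    have h2 := hGA.smul_right ((Real.pi : ℂ) * I / 4)
    rw [smul_neg] at h2
    exact Matrix.mul_exp_mul_eq_exp_neg hG h2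
  have hXa := commute_sxe_tzv n e a
  have hXb := commute_sxe_tzv n e b
  have hab := commute_tzv_tzv n (EE := EE) a b
  have hX := sxe_mul_self n e
  rw [hconj, mul_sub, Matrix.exp_neg_pi_mul_I_div_four_smul_sub, hXb.symm.mul_mul_mul_comm, hX,
    one_mul, hab.eq]
  · rw [hXb.symm.mul_mul_mul_comm, hX, one_mul, tzv_mul_self]
  · rw [hXa.symm.mul_mul_mul_comm, hX, one_mul, tzv_mul_self]
  · exact ((Commute.refl _).mul_left hXb.symm).mul_right (hXa.mul_left hab.symm)

theorem prod_tzv_mul_tzv_eq_tzv_last_mul_tzv_zero (d0 d1 : Fin n → Fin (n + 1))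
    (hor : ∀ k : Fin n, (d0 k = k.castSucc ∧ d1 k = k.succ) ∨
      (d0 k = k.succ ∧ d1 k = k.castSucc)) :
    ((List.finRange n).map fun k => tzv n EE (d1 k) * tzv n EE (d0 k)).prod =
      tzv n EE (Fin.last n) * tzv n EE 0 := by
  have hedge : ∀ k : Fin n,
      tzv n EE (d1 k) * tzv n EE (d0 k) = tzv n EE k.castSucc * tzv n EE k.succ := by
    intro k
    rcases hor k with ⟨h0, h1⟩ | ⟨h0, h1⟩
    · rw [h0, h1, (commute_tzv_tzv n _ _).eq]
    · rw [h0, h1]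
  simp only [hedge]
  rw [List.prod_map_finRange_castSucc_mul_succ _ (tzv_mul_self n), (commute_tzv_tzv n _ _).eq]

theorem Gflip_mul_prod_sxe_mul_Gflip {m : ℕ} (de : Fin m → EE) :
    Gflip n EE * ((List.finRange m).map fun l => sxe n (de l)).prod * Gflip n EE =
      ((List.finRange m).map fun l => sxe n (de l)).prod := by
  have hGX : Commute (Gflip n EE) ((List.finRange m).map fun l => sxe n (de l)).prod :=
    Commute.list_prod_right _ _ <| List.forall_mem_map.2 fun l _ =>
      commute_Gflip_localOp_inr n (de l) PX
  rw [hGX.eq, mul_assoc, Gflip_mul_self, mul_one]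

theorem Gflip_mul_Ftil_mul_Gflip (pe : Fin n → EE) (d0 d1 : Fin n → Fin (n + 1))
    (hor : ∀ k : Fin n, (d0 k = k.castSucc ∧ d1 k = k.succ) ∨
      (d0 k = k.succ ∧ d1 k = k.castSucc)) :
    Gflip n EE * Ftil n pe d0 d1 * Gflip n EE =
      tzv n EE (Fin.last n) * tzv n EE 0 * Ftil n pe d0 d1 := by
  set E : Fin n → PathOp n EE := fun k => NormedSpace.exp (((Real.pi : ℂ) * I / 4) •
    (sxe n (pe k) * (tzv n EE (d1 k) - tzv n EE (d0 k))))
  set Z : Fin n → PathOp n EE := fun k => tzv n EE (d1 k) * tzv n EE (d0 k)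
  set Sz := ((List.finRange n).map fun k => sze n (pe k)).prod
  have hGSz : Commute (Gflip n EE) Sz := Commute.list_prod_right _ _ <|
    List.forall_mem_map.2 fun k _ => commute_Gflip_localOp_inr n (pe k) PZ
  have hZE : ∀ i ∈ List.finRange n, ∀ j ∈ List.finRange n, Commute (E i) (Z j) :=
    fun i _ j _ => ((commute_tzv_exp n _ _ _ _).mul_left (commute_tzv_exp n _ _ _ _)).symm
  have hzSz : ∀ j, Commute (tzv n EE j) Sz := fun j => Commute.list_prod_right _ _ <|
    List.forall_mem_map.2 fun k _ => commute_tzv_sze n j (pe k)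
  calc Gflip n EE * Ftil n pe d0 d1 * Gflip n EE
      = Sz * (Gflip n EE * ((List.finRange n).map E).prod * Gflip n EE) := by
        rw [Ftil, ← mul_assoc, hGSz.eq, mul_assoc, mul_assoc, mul_assoc]
    _ = Sz * ((List.finRange n).map fun k => Z k * E k).prod := by
        rw [List.mul_prod_mul_eq_prod_map_of_mul_self_eq_one (Gflip_mul_self n), List.map_map]
        exact congrArg _ (congrArg _ (List.map_congr_left fun k _ =>
          Gflip_mul_exp_mul_Gflip n (pe k) (d1 k) (d0 k)))
    _ = Sz * (tzv n EE (Fin.last n) * tzv n EE 0 * ((List.finRange n).map E).prod) := by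
        rw [List.prod_map_mul_of_commute _ _ _ hZE,
          prod_tzv_mul_tzv_eq_tzv_last_mul_tzv_zero n d0 d1 hor]
    _ = tzv n EE (Fin.last n) * tzv n EE 0 * Ftil n pe d0 d1 := by
        rw [← mul_assoc, ← ((hzSz _).mul_left (hzSz _)).eq, mul_assoc, Ftil]

end PathOp

theorem symmetry_action_on_entangled_string_general (n : ℕ)
    (pe : Fin n → EE)
    (d0 d1 : Fin n → Fin (n + 1))
    (hor : ∀ k : Fin n, (d0 k = k.castSucc ∧ d1 k = k.succ) ∨
      (d0 k = k.succ ∧ d1 k = k.castSucc)) :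
    Gflip n EE * Ftil n pe d0 d1 * Gflip n EE =
        tzv n EE (Fin.last n) * tzv n EE 0 * Ftil n pe d0 d1 ∧
      ∀ (m : ℕ) (de : Fin m → EE),
        Gflip n EE * ((List.finRange m).map fun l => sxe n (de l)).prod * Gflip n EE =
          ((List.finRange m).map fun l => sxe n (de l)).prod :=
  ⟨Gflip_mul_Ftil_mul_Gflip n pe d0 d1 hor, fun _ de => Gflip_mul_prod_sxe_mul_Gflip n de⟩

/-- Let `v₀, …, v_n` be the vertices of a finite self-avoiding path `γ`
with (distinct) edges `e₁, …, e_n`, the edge `e_k` joining `v_{k−1}` and `v_k` with an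
arbitrary orientation.  Conjugating the entangled string operator by the spin-flip on all
vertices of the path gives
`(∏_{j} τ^x_{v_j}) · F̃_γ · (∏_{j} τ^x_{v_j}) = τ^z_{v_n} · τ^z_{v_0} · F̃_γ`.
Moreover any dual string operator `F_{γ̄} := ∏_{e∈γ̄} σ^x_e` is invariant under this
conjugation. -/
theorem symmetry_action_on_entangled_string (n : ℕ)
    (pe : Fin n → EE) (hpe : Function.Injective pe)
    (d0 d1 : Fin n → Fin (n + 1))
    (hor : ∀ k : Fin n, (d0 k = k.castSucc ∧ d1 k = k.succ) ∨
      (d0 k = k.succ ∧ d1 k = k.castSucc)) :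
    Gflip n EE * Ftil n pe d0 d1 * Gflip n EE =
        tzv n EE (Fin.last n) * tzv n EE 0 * Ftil n pe d0 d1 ∧
      ∀ (m : ℕ) (de : Fin m → EE),
        Gflip n EE * ((List.finRange m).map fun l => sxe n (de l)).prod * Gflip n EE =
          ((List.finRange m).map fun l => sxe n (de l)).prod :=
  symmetry_action_on_entangled_string_general n pe d0 d1 hor

end
end
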